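/- Let ν be a σ-principal σ-maxitive measure on a σ-algebra 𝓑. Then ν is autocontinuous (ν ⋘ ν). Moreover, if the empty set is the only ν-negligible subset of E, then ν is completely maxitive and has a 𝓑-measurable cardinal density, i.e. there is a 𝓑-measurable c : E → [0,∞] with ν(B) = sup_{x∈B} c(x) for all B ∈ 𝓑. -/

import Mathlib

open scoped ENNReal
open Set Filter MeasureTheory

variable {E : Type*}

/-- `f : E → [0,∞]` is `𝓑`-measurable: `{f > t}` is measurable for every `t`. -/
def Premeasurable [MeasurableSpace E] (f : E → ℝ≥0∞) : Prop :=
  ∀ t : ℝ≥0∞, MeasurableSet {x | t < f x}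

/-- A maxitive measure on the σ-algebra of measurable subsets of `E`. -/
def Maxitive [MeasurableSpace E] (ν : Set E → ℝ≥0∞) : Prop :=
  ν ∅ = 0 ∧ ∀ A B : Set E, MeasurableSet A → MeasurableSet B →
    ν (A ∪ B) = max (ν A) (ν B)

/-- A σ-maxitive measure: a maxitive measure commuting with countable nondecreasing unions. -/
def SigmaMaxitive [MeasurableSpace E] (ν : Set E → ℝ≥0∞) : Prop :=
  Maxitive ν ∧ ∀ B : ℕ → Set E, (∀ n, MeasurableSet (B n)) → Monotone B →
    ν (⋃ n, B n) = ⨆ n, ν (B n)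

/-- `N` is `τ`-negligible: it is contained in a measurable set of `τ`-measure zero. -/
def Negligible [MeasurableSpace E] (τ : Set E → ℝ≥0∞) (N : Set E) : Prop :=
  ∃ B : Set E, MeasurableSet B ∧ N ⊆ B ∧ τ B = 0

/-- The `τ`-essential supremum of `f` over `B`: `inf { t > 0 : B ∩ {f > t} is τ-negligible }`. -/
noncomputable def essSupOn [MeasurableSpace E] (τ : Set E → ℝ≥0∞) (f : E → ℝ≥0∞)
    (B : Set E) : ℝ≥0∞ :=
  sInf {t : ℝ≥0∞ | 0 < t ∧ Negligible τ (B ∩ {x | t < f x})}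

/-- `ν ≪ τ`: absolute continuity. -/
def AbsCont [MeasurableSpace E] (ν τ : Set E → ℝ≥0∞) : Prop :=
  ∀ B : Set E, MeasurableSet B → τ B = 0 → ν B = 0

/-- `ν ⋘ τ`: strong absolute continuity, i.e. `ν` has a measurable relative density
with respect to `τ`. -/
def StrongAbsCont [MeasurableSpace E] (ν τ : Set E → ℝ≥0∞) : Prop :=
  ∃ f : E → ℝ≥0∞, Premeasurable f ∧ ∀ B : Set E, MeasurableSet B → ν B = essSupOn τ f B

/-- `c` is a cardinal density of `ν`: `ν B = sup_{x ∈ B} c x` for every measurable `B`. -/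
def IsCardinalDensity [MeasurableSpace E] (ν : Set E → ℝ≥0∞) (c : E → ℝ≥0∞) : Prop :=
  ∀ B : Set E, MeasurableSet B → ν B = ⨆ x ∈ B, c x

/-- `τ` is essential: there exists a σ-finite σ-additive measure `m` with the same
null measurable sets. -/
def Essential [MeasurableSpace E] (τ : Set E → ℝ≥0∞) : Prop :=
  ∃ m : Measure E, SigmaFinite m ∧ ∀ B : Set E, MeasurableSet B → (0 < τ B ↔ 0 < m B)

/-- A σ-ideal of the σ-algebra of measurable sets. -/
def SigmaIdeal [MeasurableSpace E] (I : Set (Set E)) : Prop :=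
  I.Nonempty ∧ (∀ S ∈ I, MeasurableSet S) ∧
  (∀ f : ℕ → Set E, (∀ n, f n ∈ I) → (⋃ n, f n) ∈ I) ∧
  (∀ B S : Set E, MeasurableSet B → S ∈ I → B ⊆ S → B ∈ I)

/-- `τ` is σ-principal: every σ-ideal has a greatest element modulo `τ`-negligible sets. -/
def SigmaPrincipal [MeasurableSpace E] (τ : Set E → ℝ≥0∞) : Prop :=
  ∀ I : Set (Set E), SigmaIdeal I → ∃ L ∈ I, ∀ S ∈ I, Negligible τ (S \ L)

/-- A pseudo-multiplication on `[0,∞]`. -/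
structure PseudoMul where
  op : ℝ≥0∞ → ℝ≥0∞ → ℝ≥0∞
  assoc : ∀ a b c, op (op a b) c = op a (op b c)
  contOn : ContinuousOn (fun q : ℝ≥0∞ × ℝ≥0∞ => op q.1 q.2) (Set.Ioo 0 ⊤ ×ˢ Set.univ)
  contLeft : ∀ t, ContinuousOn (fun s => op s t) (Set.Ioi 0)
  monoLeft : ∀ t, Monotone fun s => op s t
  monoRight : ∀ s, Monotone (op s)
  one : ℝ≥0∞
  one_op : ∀ t, op one t = t
  eq_zero : ∀ s t, op s t = 0 → s = 0 ∨ t = 0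
  zero_op : ∀ t, op 0 t = 0
  op_zero : ∀ t, op t 0 = 0

/-- `t` is `⊙`-finite: `inf_{s > 0} s ⊙ t = 0`. -/
def OdotFinite (p : PseudoMul) (t : ℝ≥0∞) : Prop :=
  (⨅ s ∈ Set.Ioi (0 : ℝ≥0∞), p.op s t) = 0

/-- The idempotent `⊙`-integral `∫_B f ⊙ dτ = sup_{t ∈ [0,∞)} t ⊙ τ (B ∩ {f > t})`. -/
noncomputable def iInt [MeasurableSpace E] (p : PseudoMul) (τ : Set E → ℝ≥0∞)
    (f : E → ℝ≥0∞) (B : Set E) : ℝ≥0∞ :=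
  ⨆ t ∈ Set.Iio (⊤ : ℝ≥0∞), p.op t (τ (B ∩ {x | t < f x}))

/-- `ν ≪_⊙ τ`: `ν B ≤ ∞ ⊙ τ B` for every measurable `B`. -/
def OdotAbsCont [MeasurableSpace E] (p : PseudoMul) (ν τ : Set E → ℝ≥0∞) : Prop :=
  ∀ B : Set E, MeasurableSet B → ν B ≤ p.op ⊤ (τ B)

/-- `ν` is semi-`⊙`-finite. -/
def SemiOdotFinite [MeasurableSpace E] (p : PseudoMul) (ν : Set E → ℝ≥0∞) : Prop :=
  ∀ B : Set E, MeasurableSet B →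
    ν B = ⨆ A ∈ {A : Set E | MeasurableSet A ∧ A ⊆ B ∧ OdotFinite p (ν A)}, ν A

/-- `τ` is σ-`⊙`-finite. -/
def SigmaOdotFinite [MeasurableSpace E] (p : PseudoMul) (τ : Set E → ℝ≥0∞) : Prop :=
  ∃ B : ℕ → Set E, (∀ n, MeasurableSet (B n)) ∧ (⋃ n, B n) = Set.univ ∧
    ∀ n, OdotFinite p (τ (B n))

/-- Continuity from below. -/
def ContFromBelow [MeasurableSpace E] (ν : Set E → ℝ≥0∞) : Prop :=
  ∀ B : ℕ → Set E, (∀ n, MeasurableSet (B n)) → Monotone B →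
    Tendsto (fun n => ν (B n)) atTop (nhds (ν (⋃ n, B n)))

/-- Continuity from above (no finiteness assumption). -/
def ContFromAbove [MeasurableSpace E] (ν : Set E → ℝ≥0∞) : Prop :=
  ∀ B : ℕ → Set E, (∀ n, MeasurableSet (B n)) → Antitone B →
    Tendsto (fun n => ν (B n)) atTop (nhds (ν (⋂ n, B n)))

/-- An optimal measure: a maxitive measure continuous from below and from above. -/
def Optimal [MeasurableSpace E] (ν : Set E → ℝ≥0∞) : Prop :=
  Maxitive ν ∧ ContFromBelow ν ∧ ContFromAbove ν

/-- `ν` is completely maxitive: it commutes with arbitrary unions of measurable sets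
whose union is measurable. -/
def CompletelyMaxitive [MeasurableSpace E] (ν : Set E → ℝ≥0∞) : Prop :=
  ∀ S : Set (Set E), (∀ A ∈ S, MeasurableSet A) → MeasurableSet (⋃₀ S) →
    ν (⋃₀ S) = ⨆ A ∈ S, ν A

/-!
Choose a dense sequence `(dₙ)` in `[0,∞]`. For each `n` the measurable sets of measure at most
`dₙ` form a σ-ideal (by σ-maxitivity), so σ-principality yields a set `Lₙ` with `ν Lₙ ≤ dₙ`
that contains every such set up to a negligible set. The density `f x = inf {dₙ : x ∈ Lₙ}` is
measurable because `{f ≤ t}` is a countable Boolean combination of the `Lₙ`, it satisfies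
`ν {f ≤ t} ≤ t`, and it is `≤ dₙ` on `Lₙ`; these two facts give `ν B = ess sup_B f`.
When only the empty set is negligible the essential supremum is the plain supremum, so `f` is a
cardinal density, and a measure with a cardinal density is completely maxitive.
-/

lemma DenseRange.le_of_forall_lt_imp_le {α : Type*} [TopologicalSpace α] [LinearOrder α]
    [OrderClosedTopology α] [DenselyOrdered α] {d : ℕ → α} (hd : DenseRange d) {a b : α}
    (h : ∀ n, b < d n → a ≤ d n) : a ≤ b := by
  by_contra! hba
  obtain ⟨_, ⟨n, rfl⟩, hbn, hna⟩ := hd.exists_between hba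
  exact (h n hbn).not_gt hna

noncomputable def levelDensity (d : ℕ → ℝ≥0∞) (L : ℕ → Set E) (x : E) : ℝ≥0∞ :=
  ⨅ (n) (_ : x ∈ L n), d n

section levelDensity

variable {d : ℕ → ℝ≥0∞} {L : ℕ → Set E}

lemma levelDensity_le {n : ℕ} {x : E} (hx : x ∈ L n) : levelDensity d L x ≤ d n :=
  iInf₂_le n hx

lemma setOf_levelDensity_le (hd : DenseRange d) (t : ℝ≥0∞) :
    {x | levelDensity d L x ≤ t} = ⋂ (m) (_ : t < d m), ⋃ (n) (_ : d n < d m), L n := by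
  ext x
  simp only [mem_ofPred_eq, mem_iInter, mem_iUnion]
  refine ⟨fun hx m hm ↦ ?_, fun hx ↦ hd.le_of_forall_lt_imp_le fun m hm ↦ ?_⟩
  · obtain ⟨n, hxn, hn⟩ := by simpa only [levelDensity, iInf_lt_iff] using hx.trans_lt hm
    exact ⟨n, hn, hxn⟩
  · obtain ⟨n, hn, hxn⟩ := hx m hm
    exact (levelDensity_le hxn).trans hn.le

end levelDensity

section

variable [MeasurableSpace E] {ν : Set E → ℝ≥0∞}

lemma Negligible.mono {N M : Set E} (hN : Negligible ν N) (hMN : M ⊆ N) : Negligible ν M :=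
  let ⟨B, hB, hNB, hνB⟩ := hN
  ⟨B, hB, hMN.trans hNB, hνB⟩

namespace Maxitive

lemma mono (hν : Maxitive ν) {A B : Set E} (hA : MeasurableSet A) (hB : MeasurableSet B)
    (hAB : A ⊆ B) : ν A ≤ ν B := by
  rw [← union_eq_self_of_subset_left hAB, hν.2 A B hA hB]
  exact le_max_left _ _

lemma le_of_negligible_diff (hν : Maxitive ν) {A B : Set E} (hA : MeasurableSet A)
    (hB : MeasurableSet B) (hBA : Negligible ν (B \ A)) : ν B ≤ ν A := by
  obtain ⟨N, hN, hBAN, hνN⟩ := hBA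
  calc ν B ≤ ν (A ∪ N) := hν.mono hB (hA.union hN) fun x hx ↦
        (em (x ∈ A)).imp id fun hxA ↦ hBAN ⟨hx, hxA⟩
    _ = ν A := by rw [hν.2 A N hA hN, hνN, max_eq_left zero_le]

end Maxitive

lemma SigmaMaxitive.apply_iUnion (hν : SigmaMaxitive ν) {B : ℕ → Set E}
    (hB : ∀ n, MeasurableSet (B n)) : ν (⋃ n, B n) = ⨆ n, ν (B n) := by
  have hacc : ∀ n, MeasurableSet (accumulate B n) := fun n ↦
    MeasurableSet.biUnion (to_countable _) fun i _ ↦ hB i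
  have hacc_le : ∀ n, ν (accumulate B n) ≤ ⨆ i, ν (B i) := by
    intro n
    induction n with
    | zero => exact (accumulate_zero_nat B).symm ▸ le_iSup (fun i ↦ ν (B i)) 0
    | succ n ih =>
      rw [accumulate_succ, hν.1.2 _ _ (hacc n) (hB _)]
      exact max_le ih (le_iSup (fun i ↦ ν (B i)) _)
  refine le_antisymm ?_ (iSup_le fun n ↦ hν.1.mono (hB n) (.iUnion hB) (subset_iUnion B n))
  rw [← iUnion_accumulate, hν.2 _ hacc monotone_accumulate]
  exact iSup_le hacc_le

lemma SigmaMaxitive.sigmaIdeal_setOf_le (hν : SigmaMaxitive ν) (r : ℝ≥0∞) :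
    SigmaIdeal {B : Set E | MeasurableSet B ∧ ν B ≤ r} := by
  refine ⟨⟨∅, .empty, hν.1.1 ▸ zero_le⟩, fun S hS ↦ hS.1, fun B hB ↦ ?_,
    fun B S hB hS hBS ↦ ⟨hB, (hν.1.mono hB hS.1 hBS).trans hS.2⟩⟩
  refine ⟨.iUnion fun n ↦ (hB n).1, ?_⟩
  rw [hν.apply_iUnion fun n ↦ (hB n).1]
  exact iSup_le fun n ↦ (hB n).2

lemma IsCardinalDensity.completelyMaxitive {c : E → ℝ≥0∞} (hc : IsCardinalDensity ν c) :
    CompletelyMaxitive ν := by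
  intro S hS hSU
  rw [hc _ hSU, iSup_sUnion]
  exact iSup_congr fun A ↦ iSup_congr fun hA ↦ (hc A (hS A hA)).symm

lemma essSupOn_eq_iSup (hν0 : ν ∅ = 0) (hneg : ∀ N : Set E, Negligible ν N → N = ∅)
    (f : E → ℝ≥0∞) (B : Set E) : essSupOn ν f B = ⨆ x ∈ B, f x := by
  have hnegl : ∀ t, Negligible ν (B ∩ {x | t < f x}) ↔ (⨆ x ∈ B, f x) ≤ t := fun t ↦ by
    refine ⟨fun h ↦ iSup₂_le fun x hx ↦ ?_, fun h ↦ ⟨∅, .empty, fun x hx ↦ ?_, hν0⟩⟩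
    · exact not_lt.1 fun hxt ↦ (hneg _ h).subset ⟨hx, hxt⟩
    · exact (h.trans_lt hx.2).not_ge (le_iSup₂ (f := fun x _ ↦ f x) x hx.1)
  simp only [essSupOn, hnegl]
  refine le_antisymm (le_of_forall_gt_imp_ge_of_dense fun t ht ↦ sInf_le ⟨?_, ht.le⟩)
    (le_sInf fun t ht ↦ ht.2)
  exact zero_le.trans_lt ht

section levelDensity

variable {d : ℕ → ℝ≥0∞} {L : ℕ → Set E}

lemma measurableSet_setOf_levelDensity_le (hd : DenseRange d)
    (hL : ∀ n, MeasurableSet (L n)) (t : ℝ≥0∞) :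
    MeasurableSet {x | levelDensity d L x ≤ t} := by
  rw [setOf_levelDensity_le hd]
  exact .iInter fun _ ↦ .iInter fun _ ↦ .iUnion fun n ↦ .iUnion fun _ ↦ hL n

lemma premeasurable_levelDensity (hd : DenseRange d) (hL : ∀ n, MeasurableSet (L n)) :
    Premeasurable (levelDensity d L) := fun t ↦ by
  simpa only [compl_ofPred, not_le] using (measurableSet_setOf_levelDensity_le hd hL t).compl

lemma SigmaMaxitive.apply_levelDensity_sublevel_le (hν : SigmaMaxitive ν) (hd : DenseRange d)
    (hL : ∀ n, MeasurableSet (L n)) (hνL : ∀ n, ν (L n) ≤ d n) (t : ℝ≥0∞) :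
    ν {x | levelDensity d L x ≤ t} ≤ t := by
  refine hd.le_of_forall_lt_imp_le fun m hm ↦ ?_
  have hU : ∀ n, MeasurableSet (⋃ (_ : d n < d m), L n) := fun n ↦ .iUnion fun _ ↦ hL n
  have hsub : {x | levelDensity d L x ≤ t} ⊆ ⋃ (n) (_ : d n < d m), L n := by
    rw [setOf_levelDensity_le hd]
    exact iInter₂_subset m hm
  refine (hν.1.mono (measurableSet_setOf_levelDensity_le hd hL t) (.iUnion hU) hsub).trans ?_
  rw [hν.apply_iUnion hU]
  refine iSup_le fun n ↦ ?_
  by_cases hn : d n < d m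
  · rw [iUnion_eq_if, if_pos hn]
    exact (hνL n).trans hn.le
  · rw [iUnion_eq_if, if_neg hn, hν.1.1]
    exact zero_le

end levelDensity

theorem SigmaMaxitive.strongAbsCont_self (hν : SigmaMaxitive ν) (hprin : SigmaPrincipal ν) :
    StrongAbsCont ν ν := by
  obtain ⟨d, hd⟩ := TopologicalSpace.exists_dense_seq ℝ≥0∞
  choose L hL hLmax using fun n ↦ hprin _ (hν.sigmaIdeal_setOf_le (d n))
  have hLm : ∀ n, MeasurableSet (L n) := fun n ↦ (hL n).1
  refine ⟨levelDensity d L, premeasurable_levelDensity hd hLm, fun B hB ↦ le_antisymm ?_ ?_⟩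
  · refine le_sInf fun t ⟨_, ht⟩ ↦ ?_
    have hle := measurableSet_setOf_levelDensity_le hd hLm t
    refine (hν.1.le_of_negligible_diff hle hB (ht.mono fun x hx ↦ ⟨hx.1, ?_⟩)).trans
      (hν.apply_levelDensity_sublevel_le hd hLm (fun n ↦ (hL n).2) t)
    exact not_le.1 (notMem_ofPred_iff.1 hx.2)
  · refine hd.le_of_forall_lt_imp_le fun m hm ↦ sInf_le ⟨zero_le.trans_lt hm, ?_⟩
    exact (hLmax m B ⟨hB, hm.le⟩).mono fun x hx ↦
      ⟨hx.1, fun hxL ↦ (levelDensity_le hxL).not_gt hx.2⟩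

end

/-- A σ-principal σ-maxitive measure is autocontinuous; if moreover the empty set is its
only negligible subset, it is completely maxitive and has a measurable cardinal density. -/
theorem sigmaPrincipal_autocontinuous_completelyMaxitive [MeasurableSpace E]
    (ν : Set E → ℝ≥0∞) (hν : SigmaMaxitive ν) (hprin : SigmaPrincipal ν) :
    StrongAbsCont ν ν ∧
    ((∀ N : Set E, Negligible ν N → N = ∅) →
      CompletelyMaxitive ν ∧ ∃ c : E → ℝ≥0∞, Premeasurable c ∧ IsCardinalDensity ν c) := by
  obtain ⟨f, hf, hνf⟩ := hν.strongAbsCont_self hprin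
  refine ⟨⟨f, hf, hνf⟩, fun hneg ↦ ?_⟩
  have hc : IsCardinalDensity ν f := fun B hB ↦
    (hνf B hB).trans (essSupOn_eq_iSup hν.1.1 hneg f B)
  exact ⟨hc.completelyMaxitive, f, hf, hc⟩
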